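/- arXiv:1807.01501 — 4 statements merged into one kernel-verified Lean document; each statement's English description precedes it below -/
import Mathlib

section
/- Let ← be a transitive relation on a type X of theories ('axiom adding'), compatible with an equivalence relation ≡ in the sense that T₁ ≡ T₂ and T₂ ← T₃ imply T₁ ← T₃, and T₁ ← T₂ and T₂ ≡ T₃ imply T₁ ← T₃. Let S be the symmetric closure of ←, and let ⇝ denote axiom removal, the converse of ←. Suppose X has the amalgamation property: whenever T₁ ⇝ T and T₂ ⇝ T, there exists T' with T' ⇝ T₁ and T' ⇝ T₂. Then any two elements of X connected by a path in (X, ≡, S) of length 3 are connected by a path of length at most 2. -/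
/-- A path from `a` to `b` using `E`-steps (cost 0) and `S`-steps (cost 1);
`Reach E S a b n` says there is a path from `a` to `b` with exactly `n` S-steps. -/
inductive Reach {X : Type*} (E S : X → X → Prop) : X → X → ℕ → Prop
  | refl (a : X) : Reach E S a a 0
  | estep {a b c : X} {n : ℕ} : E a b → Reach E S b c n → Reach E S a c n
  | sstep {a b c : X} {n : ℕ} : S a b → Reach E S b c n → Reach E S a c (n + 1)

/-- The step distance: the minimum number of `S`-steps in a path from `a` to `b`,
`∞` if there is no path. -/
noncomputable def stepDist {X : Type*} (E S : X → X → Prop) (a b : X) : ℕ∞ :=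
  sInf ((↑) '' {n : ℕ | Reach E S a b n})

lemma reach_zero' {X : Type*} {E S : X → X → Prop} (hE : Equivalence E) :
    ∀ {a b : X}, Reach E S a b 0 → E a b := by
  intro a b h
  generalize hn : (0:ℕ) = n at h
  induction h with
  | refl a => exact hE.refl a
  | estep e _ ih => exact hE.trans e (ih hn)
  | sstep _ _ _ => omega

lemma reach_succ' {X : Type*} {E A : X → X → Prop} (hE : Equivalence E)
    (hcompL : ∀ T₁ T₂ T₃, E T₁ T₂ → A T₂ T₃ → A T₁ T₃)
    (hcompR : ∀ T₁ T₂ T₃, A T₁ T₂ → E T₂ T₃ → A T₁ T₃) :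
    ∀ {a b : X} {n : ℕ}, Reach E (fun a b => A a b ∨ A b a) a b (n + 1) →
      ∃ c, (A a c ∨ A c a) ∧ Reach E (fun a b => A a b ∨ A b a) c b n := by
  intro a b n h
  generalize hn : n + 1 = m at h
  induction h with
  | refl a => omega
  | estep e _ ih =>
    obtain ⟨c, hc, hr⟩ := ih hn
    exact ⟨c, hc.imp (hcompL _ _ _ e) (fun h' => hcompR _ _ _ h' (hE.symm e)), hr⟩
  | sstep s hr _ =>
    obtain rfl := Nat.succ_injective hn
    exact ⟨_, s, hr⟩

/-- If `A` (axiom adding, `A T T'` means `T'` is obtained from `T` by adding one axiom)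
is transitive and compatible with the equivalence `E`, and the class has the
amalgamation property, then any two theories connected by a path of length 3 in the
cluster network `(X, E, symmetric closure of A)` are connected by a path of length ≤ 2. -/
theorem three_path_shortening {X : Type*} (E A : X → X → Prop)
    (hE : Equivalence E)
    (htrans : ∀ T₁ T₂ T₃, A T₁ T₂ → A T₂ T₃ → A T₁ T₃)
    (hcompL : ∀ T₁ T₂ T₃, E T₁ T₂ → A T₂ T₃ → A T₁ T₃)
    (hcompR : ∀ T₁ T₂ T₃, A T₁ T₂ → E T₂ T₃ → A T₁ T₃)
    (hamalg : ∀ T T₁ T₂, A T T₁ → A T T₂ → ∃ T', A T₁ T' ∧ A T₂ T')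
    (T T' : X) (h : Reach E (fun a b => A a b ∨ A b a) T T' 3) :
    ∃ n ≤ 2, Reach E (fun a b => A a b ∨ A b a) T T' n := by
  obtain ⟨a, s1, h⟩ := reach_succ' hE hcompL hcompR h
  obtain ⟨b, s2, h⟩ := reach_succ' hE hcompL hcompR h
  obtain ⟨c, s3, h⟩ := reach_succ' hE hcompL hcompR h
  have e : E c T' := reach_zero' hE h
  -- absorb the trailing E-step into the last S-step
  have s3' : A b T' ∨ A T' b :=
    s3.imp (fun h' => hcompR _ _ _ h' e) (fun h' => hcompL _ _ _ (hE.symm e) h')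
  clear s3 e h
  -- now a pure 3-step path T —s1— a —s2— b —s3'— T'
  have two : ∀ x, (A T x ∨ A x T) → (A x T' ∨ A T' x) →
      ∃ n ≤ 2, Reach E (fun a b => A a b ∨ A b a) T T' n :=
    fun x h1 h2 => ⟨2, le_refl 2, .sstep h1 (.sstep h2 (.refl T'))⟩
  rcases s1 with h1 | h1 <;> rcases s2 with h2 | h2 <;> rcases s3' with h3 | h3
  · exact two b (Or.inl (htrans _ _ _ h1 h2)) (Or.inl h3)
  · exact two b (Or.inl (htrans _ _ _ h1 h2)) (Or.inr h3)
  · -- F B F : amalgamate at b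
    obtain ⟨c, hac, htc⟩ := hamalg b a T' h2 h3
    exact two c (Or.inl (htrans _ _ _ h1 hac)) (Or.inr htc)
  · exact two a (Or.inl h1) (Or.inr (htrans _ _ _ h3 h2))
  · exact two a (Or.inr h1) (Or.inl (htrans _ _ _ h2 h3))
  · -- B F B : amalgamate at a
    obtain ⟨c, htc, hbc⟩ := hamalg a T b h1 h2
    exact two c (Or.inl htc) (Or.inr (htrans _ _ _ h3 hbc))
  · exact two b (Or.inr (htrans _ _ _ h2 h1)) (Or.inl h3)
  · exact two b (Or.inr (htrans _ _ _ h2 h1)) (Or.inr h3)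
end

section
/- Let X be a type with an equivalence relation ≡ and a transitive relation ← compatible with ≡ (i.e., T₁ ≡ T₂ ∧ T₂ ← T₃ → T₁ ← T₃, and T₁ ← T₂ ∧ T₂ ≡ T₃ → T₁ ← T₃), and suppose X has the amalgamation property: for all T, T₁, T₂, if T₁ ← T and T₂ ← T (a common lower element T), then there is T' with T' ← T₁ and T' ← T₂ (a common upper element). Then the step distance d on (X, ≡, symmetric closure of ←) satisfies d(T,T') ∈ {0, 1, 2, ∞} for all T, T' ∈ X. -/
lemma reach_normal {X : Type*} (E A : X → X → Prop)
    (hE : Equivalence E)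
    (htrans : ∀ T₁ T₂ T₃, A T₁ T₂ → A T₂ T₃ → A T₁ T₃)
    (hcompL : ∀ T₁ T₂ T₃, E T₁ T₂ → A T₂ T₃ → A T₁ T₃)
    (hcompR : ∀ T₁ T₂ T₃, A T₁ T₂ → E T₂ T₃ → A T₁ T₃)
    (hamalg : ∀ T T₁ T₂, A T T₁ → A T T₂ → ∃ T', A T₁ T' ∧ A T₂ T')
    {a b : X} {n : ℕ} (h : Reach E (fun x y => A x y ∨ A y x) a b n) :
    E a b ∨ A a b ∨ A b a ∨ ∃ c, A a c ∧ A b c := by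
  induction h with
  | refl a => exact Or.inl (hE.refl a)
  | estep hab _ ih =>
    rcases ih with h | h | h | ⟨d, h1, h2⟩
    · exact Or.inl (hE.trans hab h)
    · exact Or.inr (Or.inl (hcompL _ _ _ hab h))
    · exact Or.inr (Or.inr (Or.inl (hcompR _ _ _ h (hE.symm hab))))
    · exact Or.inr (Or.inr (Or.inr ⟨d, hcompL _ _ _ hab h1, h2⟩))
  | sstep hab _ ih =>
    rcases hab with hab | hba
    · rcases ih with h | h | h | ⟨d, h1, h2⟩
      · exact Or.inr (Or.inl (hcompR _ _ _ hab h))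
      · exact Or.inr (Or.inl (htrans _ _ _ hab h))
      · exact Or.inr (Or.inr (Or.inr ⟨_, hab, h⟩))
      · exact Or.inr (Or.inr (Or.inr ⟨d, htrans _ _ _ hab h1, h2⟩))
    · rcases ih with h | h | h | ⟨d, h1, h2⟩
      · exact Or.inr (Or.inr (Or.inl (hcompL _ _ _ (hE.symm h) hba)))
      · obtain ⟨e, he1, he2⟩ := hamalg _ _ _ hba h
        exact Or.inr (Or.inr (Or.inr ⟨e, he1, he2⟩))
      · exact Or.inr (Or.inr (Or.inl (htrans _ _ _ h hba)))
      · obtain ⟨e, he1, he2⟩ := hamalg _ _ _ hba h1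
        exact Or.inr (Or.inr (Or.inr ⟨e, he1, htrans _ _ _ h2 he2⟩))

/-- Under the amalgamation property, the step distance on the cluster network
`(X, E, symmetric closure of the axiom-adding relation A)` only takes the
values `0`, `1`, `2` and `∞`. -/
theorem stepDist_mem_insert {X : Type*} (E A : X → X → Prop)
    (hE : Equivalence E)
    (htrans : ∀ T₁ T₂ T₃, A T₁ T₂ → A T₂ T₃ → A T₁ T₃)
    (hcompL : ∀ T₁ T₂ T₃, E T₁ T₂ → A T₂ T₃ → A T₁ T₃)
    (hcompR : ∀ T₁ T₂ T₃, A T₁ T₂ → E T₂ T₃ → A T₁ T₃)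
    (hamalg : ∀ T T₁ T₂, A T T₁ → A T T₂ → ∃ T', A T₁ T' ∧ A T₂ T')
    (T T' : X) :
    stepDist E (fun a b => A a b ∨ A b a) T T' ∈ ({0, 1, 2, ⊤} : Set ℕ∞) := by
  set S : X → X → Prop := fun a b => A a b ∨ A b a with hS
  by_cases hne : ∃ n, Reach E S T T' n
  · obtain ⟨n, hn⟩ := hne
    have key : ∃ m ≤ 2, Reach E S T T' m := by
      rcases reach_normal E A hE htrans hcompL hcompR hamalg hn with h | h | h | ⟨c, h1, h2⟩
      · exact ⟨0, by norm_num, Reach.estep h (Reach.refl _)⟩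
      · exact ⟨1, by norm_num, Reach.sstep (Or.inl h) (Reach.refl _)⟩
      · exact ⟨1, by norm_num, Reach.sstep (Or.inr h) (Reach.refl _)⟩
      · exact ⟨2, by norm_num, Reach.sstep (Or.inl h1) (Reach.sstep (Or.inr h2) (Reach.refl _))⟩
    obtain ⟨m, hm2, hm⟩ := key
    have hle : stepDist E S T T' ≤ 2 := by
      refine le_trans (sInf_le ⟨m, hm, rfl⟩) ?_
      exact_mod_cast hm2
    have : stepDist E S T T' = 0 ∨ stepDist E S T T' = 1 ∨ stepDist E S T T' = 2 := by
      generalize hg : stepDist E S T T' = x at hle ⊢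
      lift x to ℕ using ne_top_of_le_ne_top (by simp) hle
      have : x ≤ 2 := by exact_mod_cast hle
      interval_cases x <;> simp
    rcases this with h | h | h <;> simp [h]
  · have : {n : ℕ | Reach E S T T' n} = ∅ := by
      ext n; simp only [Set.mem_setOf_eq, Set.mem_empty_iff_false, iff_false]
      exact fun h => hne ⟨n, h⟩
    simp [stepDist, this]
end

section
/- If T₁ and T₂ are definitionally equivalent theories, then they have the same conceptual size: Cz(T₁) = Cz(T₂). -/
open FirstOrder Language Cardinal

/-- A translation between the formulas (with free variables among `v₀, v₁, …`) of two
languages: a map commuting with equalities of variables, the Boolean connectives and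
quantification. -/
structure Translation (L₁ L₂ : FirstOrder.Language.{0,0}) where
  toFun : ∀ {n : ℕ}, L₁.BoundedFormula ℕ n → L₂.BoundedFormula ℕ n
  map_falsum : ∀ {n : ℕ},
    toFun (BoundedFormula.falsum : L₁.BoundedFormula ℕ n) = BoundedFormula.falsum
  map_eq : ∀ {n : ℕ} (i j : ℕ ⊕ Fin n),
    toFun (Term.bdEqual (Term.var i) (Term.var j)) = Term.bdEqual (Term.var i) (Term.var j)
  map_imp : ∀ {n : ℕ} (φ ψ : L₁.BoundedFormula ℕ n),
    toFun (φ.imp ψ) = (toFun φ).imp (toFun ψ)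
  map_all : ∀ {n : ℕ} (φ : L₁.BoundedFormula ℕ (n + 1)), toFun φ.all = (toFun φ).all

/-- A translation is an interpretation of `T₁` into `T₂` if it maps theorems to theorems. -/
def Translation.IsInterpretation {L₁ L₂ : FirstOrder.Language.{0,0}} (tr : Translation L₁ L₂)
    (T₁ : L₁.Theory) (T₂ : L₂.Theory) : Prop :=
  ∀ {n : ℕ} (φ : L₁.BoundedFormula ℕ n), T₁ ⊨ᵇ φ → T₂ ⊨ᵇ tr.toFun φ

/-- A translation is a faithful interpretation of `T₁` into `T₂` if
`T₁ ⊨ φ ⟺ T₂ ⊨ tr(φ)`. -/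
def Translation.IsFaithful {L₁ L₂ : FirstOrder.Language.{0,0}} (tr : Translation L₁ L₂)
    (T₁ : L₁.Theory) (T₂ : L₂.Theory) : Prop :=
  ∀ {n : ℕ} (φ : L₁.BoundedFormula ℕ n), T₁ ⊨ᵇ φ ↔ T₂ ⊨ᵇ tr.toFun φ

/-- The conceptual size of a theory: the number of equivalence classes of formulas
under `T`-provable equivalence (the size of the Lindenbaum–Tarski algebra of `T`). -/
noncomputable def Cz (L : FirstOrder.Language.{0,0}) (T : L.Theory) : Cardinal :=
  #(Quot (fun φ ψ : L.Formula ℕ => T ⊨ᵇ φ.iff ψ))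

/-! A translation commutes with `↔`, so an interpretation sends `T₁`-equivalent formulas to
`T₂`-equivalent ones and descends to a map on concepts. The round-trip hypotheses of a definitional
equivalence make the two induced maps mutually inverse. -/

def FirstOrder.Language.Theory.Concept {L : FirstOrder.Language.{0,0}} (T : L.Theory) : Type :=
  Quot (fun φ ψ : L.Formula ℕ => T ⊨ᵇ φ.iff ψ)

namespace Translation

variable {L₁ L₂ : FirstOrder.Language.{0,0}} (tr : Translation L₁ L₂)

theorem map_not {n : ℕ} (φ : L₁.BoundedFormula ℕ n) : tr.toFun φ.not = (tr.toFun φ).not :=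
  (tr.map_imp φ ⊥).trans (congrArg _ tr.map_falsum)

theorem map_inf {n : ℕ} (φ ψ : L₁.BoundedFormula ℕ n) :
    tr.toFun (φ ⊓ ψ) = tr.toFun φ ⊓ tr.toFun ψ := by
  change tr.toFun (φ.imp ψ.not).not = ((tr.toFun φ).imp (tr.toFun ψ).not).not
  rw [tr.map_not, tr.map_imp, tr.map_not]

theorem map_iff {n : ℕ} (φ ψ : L₁.BoundedFormula ℕ n) :
    tr.toFun (φ.iff ψ) = (tr.toFun φ).iff (tr.toFun ψ) := by
  rw [BoundedFormula.iff, tr.map_inf, tr.map_imp, tr.map_imp, BoundedFormula.iff]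

namespace IsInterpretation

variable {tr} {T₁ : L₁.Theory} {T₂ : L₂.Theory}

theorem models_iff (h : tr.IsInterpretation T₁ T₂) {n : ℕ} {φ ψ : L₁.BoundedFormula ℕ n}
    (hφψ : T₁ ⊨ᵇ φ.iff ψ) : T₂ ⊨ᵇ (tr.toFun φ).iff (tr.toFun ψ) :=
  tr.map_iff φ ψ ▸ h _ hφψ

def mapConcept (h : tr.IsInterpretation T₁ T₂) : T₁.Concept → T₂.Concept :=
  Quot.map tr.toFun fun _ _ => h.models_iff

theorem mapConcept_leftInverse {tr' : Translation L₂ L₁} (h : tr.IsInterpretation T₁ T₂)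
    (h' : tr'.IsInterpretation T₂ T₁)
    (hc : ∀ φ : L₁.Formula ℕ, T₁ ⊨ᵇ (tr'.toFun (tr.toFun φ)).iff φ) :
    Function.LeftInverse h'.mapConcept h.mapConcept :=
  Quot.ind fun φ => Quot.sound (hc φ)

end IsInterpretation

end Translation

/-- Definitionally equivalent theories have the same conceptual size. -/
theorem cz_eq_of_definitional_equivalence {L₁ L₂ : FirstOrder.Language.{0,0}}
    (T₁ : L₁.Theory) (T₂ : L₂.Theory)
    (tr₁₂ : Translation L₁ L₂) (tr₂₁ : Translation L₂ L₁)
    (h₁₂ : tr₁₂.IsInterpretation T₁ T₂) (h₂₁ : tr₂₁.IsInterpretation T₂ T₁)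
    (hc₁ : ∀ {n : ℕ} (φ : L₁.BoundedFormula ℕ n), T₁ ⊨ᵇ (tr₂₁.toFun (tr₁₂.toFun φ)).iff φ)
    (hc₂ : ∀ {n : ℕ} (ψ : L₂.BoundedFormula ℕ n), T₂ ⊨ᵇ (tr₁₂.toFun (tr₂₁.toFun ψ)).iff ψ) :
    Cz L₁ T₁ = Cz L₂ T₂ :=
  Cardinal.mk_congr
    { toFun := h₁₂.mapConcept
      invFun := h₂₁.mapConcept
      left_inv := Translation.IsInterpretation.mapConcept_leftInverse h₁₂ h₂₁ hc₁
      right_inv := Translation.IsInterpretation.mapConcept_leftInverse h₂₁ h₁₂ hc₂ }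
end

section
/- Let T and T' be first-order theories in finite relational languages over the empty base language's common reducts, and suppose that for every cardinal κ, T has a model of cardinality κ if and only if T' does. Then the conceptual distance between T and T' is finite. -/
open FirstOrder Language Cardinal

/-- The collection of all (first-order) theories, each together with its language. -/
def TheoryObj := Σ L : FirstOrder.Language.{0,0}, L.Theory

/-- Definitional equivalence of theories: interpretations in both directions whose
compositions are provably the identity modulo the respective theories. -/
def DefEquiv (x y : TheoryObj) : Prop :=
  ∃ (t₁₂ : Translation x.1 y.1) (t₂₁ : Translation y.1 x.1),
    t₁₂.IsInterpretation x.2 y.2 ∧ t₂₁.IsInterpretation y.2 x.2 ∧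
    (∀ {n : ℕ} (φ : x.1.BoundedFormula ℕ n), x.2 ⊨ᵇ (t₂₁.toFun (t₁₂.toFun φ)).iff φ) ∧
    (∀ {n : ℕ} (ψ : y.1.BoundedFormula ℕ n), y.2 ⊨ᵇ (t₁₂.toFun (t₂₁.toFun ψ)).iff ψ)

/-- The language consisting of a single relation symbol of arity `m`. -/
def singleRelLang (m : ℕ) : FirstOrder.Language.{0,0} :=
  ⟨fun _ => Empty, fun k => if k = m then PUnit else PEmpty⟩

/-- `y` is a one-concept-extension of `x`: the language of `y` is that of `x` together
with one new relation symbol, and `y` is a conservative extension of `x`. -/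
def OneConcept (x y : TheoryObj) : Prop :=
  ∃ (m : ℕ) (h : y.1 = x.1.sum (singleRelLang m)),
    ∀ φ : x.1.Sentence,
      ((show (x.1.sum (singleRelLang m)).Theory from h ▸ y.2) ⊨ᵇ
        (LHom.sumInl : x.1 →ᴸ x.1.sum (singleRelLang m)).onSentence φ) ↔ x.2 ⊨ᵇ φ

/-- `x` and `y` are separated by at most one concept. -/
def OneConceptStep (x y : TheoryObj) : Prop :=
  OneConcept x y ∨ OneConcept y x

/-- The conceptual distance between two theories: the minimum number of concepts
separating them, i.e. the step distance on the cluster network whose equivalence is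
definitional equivalence and whose one-step relation is separation by one concept. -/
noncomputable def conceptualDist (x y : TheoryObj) : ℕ∞ :=
  sInf ((↑) '' {n : ℕ | Reach DefEquiv OneConceptStep x y n})

/-! Let `T₀` be the set of pure-equality sentences entailed by `T`. Pure-equality sentences only
see the cardinality of a model, and by compactness and Löwenheim–Skolem (the language being
countable) the models of `T₀` are exactly the sets whose cardinality lies in the spectrum of
`T`. So theories with equal spectra have pure-equality parts with the same models, and these are
definitionally equivalent. On the other hand, after renaming the finitely many relation symbols
of `T`, its language is obtained from the empty one by adding one symbol at a time, and
restricting `T` to each successive sublanguage is a conservative one-concept step; the last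
restriction is `T₀`. -/

namespace FirstOrder.Language

namespace Theory

universe u v w

variable {L : Language.{u, v}} (T : L.Theory)

theorem models_iff_self {α : Type w} {n : ℕ} (φ : L.BoundedFormula α n) : T ⊨ᵇ φ.iff φ :=
  fun _ _ _ => by rw [BoundedFormula.realize_iff]

theorem ModelsBoundedFormula.of_model_imp {T T' : L.Theory}
    (h : ∀ (M : Type (max u v w)) [L.Structure M] [Nonempty M], M ⊨ T' → M ⊨ T)
    {α : Type w} {n : ℕ} {φ : L.BoundedFormula α n} (hφ : T ⊨ᵇ φ) : T' ⊨ᵇ φ := fun M _ _ =>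
  have := h M M.is_model
  hφ.realize_boundedFormula M

theorem exists_infinite_model_of_forall_le_card
    (h : ∀ n : ℕ, ∃ M : ModelType.{u, v, max u v} T, (n : Cardinal) ≤ #M) :
    ∃ M : ModelType.{u, v, max u v} T, Infinite M := by
  have hunion : T ∪ L.infiniteTheory = ⋃ n : ℕ, T ∪ Sentence.cardGe L '' Set.Iio n := by
    rw [← Set.union_iUnion, ← Set.image_iUnion, Set.iUnion_Iio, Set.image_univ]
    rfl
  have hdir : Directed (· ⊆ ·) fun n : ℕ => T ∪ Sentence.cardGe L '' Set.Iio n :=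
    Monotone.directed_le <| monotone_const.union <|
      Set.monotone_image.comp fun _ _ => Set.Iio_subset_Iio
  have hsat : (T ∪ L.infiniteTheory).IsSatisfiable := by
    rw [hunion, isSatisfiable_directed_union_iff hdir]
    intro n
    obtain ⟨M, hM⟩ := h n
    have : M ⊨ Sentence.cardGe L '' Set.Iio n := (model_iff _).2 <| by
      rintro _ ⟨k, hk, rfl⟩
      exact (Sentence.realize_cardGe L (M := M) k).2 ((Nat.cast_le.2 hk.le).trans hM)
    have : M ⊨ T ∪ _ := M.is_model.union this
    exact Model.isSatisfiable M
  obtain ⟨M⟩ := hsat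
  have : M ⊨ T := M.is_model.mono Set.subset_union_left
  exact ⟨.of T M, (L.model_infiniteTheory_iff).1 (M.is_model.mono Set.subset_union_right)⟩

end Theory

theorem Sentence.realize_cardGe_inf_not_cardGe_succ (L : Language) {M : Type*} [L.Structure M]
    (k : ℕ) : M ⊨ Sentence.cardGe L k ⊓ (Sentence.cardGe L (k + 1)).not ↔ #M = k := by
  rw [Sentence.realize_inf, Sentence.realize_not, Sentence.realize_cardGe, Sentence.realize_cardGe,
    not_le, Nat.cast_succ, lt_natCast_add_one_iff, le_antisymm_iff, and_comm]

theorem card_le_aleph0_of_finite (L : Language) [L.IsRelational] [Finite (Σ n, L.Relations n)] :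
    L.card ≤ ℵ₀ := by
  have : Countable L.Symbols := by unfold Language.Symbols; infer_instance
  exact mk_le_aleph0

namespace LHom

universe u v

variable {L L' L'' : Language.{u, v}}

theorem comp_onSentence (G : L' →ᴸ L'') (F : L →ᴸ L') (φ : L.Sentence) :
    (G.comp F).onSentence φ = G.onSentence (F.onSentence φ) :=
  congrFun (comp_onBoundedFormula G F) φ

@[simp]
theorem id_onSentence (φ : L.Sentence) : (LHom.id L).onSentence φ = φ :=
  congrFun id_onBoundedFormula φ

def comapTheory (F : L →ᴸ L') (T : L'.Theory) : L.Theory :=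
  {φ | T ⊨ᵇ F.onSentence φ}

theorem comapTheory_models_iff (F : L →ᴸ L') (T : L'.Theory) (φ : L.Sentence) :
    F.comapTheory T ⊨ᵇ φ ↔ T ⊨ᵇ F.onSentence φ := by
  refine ⟨fun h => Theory.models_sentence_iff.2 fun M => ?_,
    fun h => Theory.models_sentence_of_mem h⟩
  let := F.reduct M
  have : M ⊨ F.comapTheory T := Theory.model_iff _ |>.2 fun ψ hψ =>
    (F.realize_onSentence M ψ).1 (hψ.realize_sentence M)
  exact (F.realize_onSentence M φ).2 (h.realize_sentence M)

theorem comapTheory_comapTheory (G : L' →ᴸ L'') (F : L →ᴸ L') (T : L''.Theory) :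
    F.comapTheory (G.comapTheory T) = (G.comp F).comapTheory T := by
  ext φ
  exact (comapTheory_models_iff _ _ _).trans (by rw [← comp_onSentence]; rfl)

theorem model_comapTheory_id_iff (T : L.Theory) (M : Type*) [L.Structure M] [Nonempty M] :
    M ⊨ (LHom.id L).comapTheory T ↔ M ⊨ T := by
  refine ⟨fun h => (Theory.model_iff T).2 fun φ hφ => ?_,
    fun h => (Theory.model_iff _).2 fun φ hφ => ?_⟩
  · have hφ' : φ ∈ (LHom.id L).comapTheory T := by
      change T ⊨ᵇ _
      rw [id_onSentence]
      exact Theory.models_sentence_of_mem hφ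
    exact Theory.realize_sentence_of_mem _ hφ'
  · simpa using hφ.realize_sentence M

end LHom

namespace LEquiv

universe u v w

variable {L L' : Language.{u, v}} (e : L ≃ᴸ L') (T : L.Theory)

def ofSymbolEquivs (ef : ∀ n, L.Functions n ≃ L'.Functions n)
    (er : ∀ n, L.Relations n ≃ L'.Relations n) : L ≃ᴸ L' where
  toLHom := ⟨fun n => ef n, fun n => er n⟩
  invLHom := ⟨fun n => (ef n).symm, fun n => (er n).symm⟩
  left_inv := LHom.funext (by ext; simp) (by ext; simp)
  right_inv := LHom.funext (by ext; simp) (by ext; simp)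

theorem isExpansionOn_reduct_invLHom (M : Type*) [L.Structure M] :
    @LHom.IsExpansionOn L L' e.toLHom M _ (e.invLHom.reduct M) :=
  letI := e.invLHom.reduct M
  { map_onFunction := fun f xs => by
      change Structure.funMap (e.invLHom.onFunction (e.toLHom.onFunction f)) xs = _
      rw [← LHom.comp_onFunction, e.left_inv]; rfl
    map_onRelation := fun R xs => by
      change Structure.RelMap (e.invLHom.onRelation (e.toLHom.onRelation R)) xs = _
      rw [← LHom.comp_onRelation, e.left_inv]; rfl }

@[simp]
theorem invLHom_onBoundedFormula_toLHom_onBoundedFormula {α : Type w} {n : ℕ}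
    (φ : L.BoundedFormula α n) : e.invLHom.onBoundedFormula (e.toLHom.onBoundedFormula φ) = φ :=
  e.onBoundedFormula.symm_apply_apply φ

@[simp]
theorem toLHom_onBoundedFormula_invLHom_onBoundedFormula {α : Type w} {n : ℕ}
    (ψ : L'.BoundedFormula α n) : e.toLHom.onBoundedFormula (e.invLHom.onBoundedFormula ψ) = ψ :=
  e.onBoundedFormula.apply_symm_apply ψ

theorem onTheory_models_onBoundedFormula_iff {α : Type w} {n : ℕ} (φ : L.BoundedFormula α n) :
    e.toLHom.onTheory T ⊨ᵇ e.toLHom.onBoundedFormula φ ↔ T ⊨ᵇ φ := by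
  constructor
  · intro h M v xs
    let := e.invLHom.reduct M
    have := e.isExpansionOn_reduct_invLHom M
    have : M ⊨ e.toLHom.onTheory T := (e.toLHom.onTheory_model T).2 M.is_model
    exact (e.toLHom.realize_onBoundedFormula φ).1 (h.realize_boundedFormula M)
  · intro h M v xs
    let := e.toLHom.reduct M
    have : M ⊨ T := (e.toLHom.onTheory_model T).1 M.is_model
    exact (e.toLHom.realize_onBoundedFormula φ).2 (h.realize_boundedFormula M)

theorem models_invLHom_onBoundedFormula {α : Type w} {n : ℕ} {ψ : L'.BoundedFormula α n}
    (h : e.toLHom.onTheory T ⊨ᵇ ψ) : T ⊨ᵇ e.invLHom.onBoundedFormula ψ := by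
  rwa [← e.onTheory_models_onBoundedFormula_iff, toLHom_onBoundedFormula_invLHom_onBoundedFormula]

end LEquiv

end FirstOrder.Language

namespace Reach

variable {X : Type*} {E S : X → X → Prop}

theorem trans {a b c : X} {n m : ℕ} (hab : Reach E S a b n) (hbc : Reach E S b c m) :
    Reach E S a c (n + m) := by
  induction hab with
  | refl => simpa using hbc
  | estep h _ ih => exact .estep h (ih hbc)
  | sstep h _ ih => simpa [Nat.add_right_comm] using Reach.sstep h (ih hbc)

theorem symm (hE : ∀ {a b}, E a b → E b a) (hS : ∀ {a b}, S a b → S b a) {a b : X} {n : ℕ}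
    (h : Reach E S a b n) : Reach E S b a n := by
  induction h with
  | refl a => exact .refl a
  | estep h _ ih => exact ih.trans (.estep (hE h) (.refl _))
  | sstep h _ ih => exact ih.trans (.sstep (hS h) (.refl _))

end Reach

namespace Translation

variable {L₁ L₂ : FirstOrder.Language.{0,0}}

def ofLHom (F : L₁ →ᴸ L₂) : Translation L₁ L₂ where
  toFun := F.onBoundedFormula
  map_falsum := rfl
  map_eq _ _ := rfl
  map_imp _ _ := rfl
  map_all _ := rfl

protected def id (L : FirstOrder.Language.{0,0}) : Translation L L where
  toFun := id
  map_falsum := rfl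
  map_eq _ _ := rfl
  map_imp _ _ := rfl
  map_all _ := rfl

end Translation

theorem DefEquiv.symm {x y : TheoryObj} : DefEquiv x y → DefEquiv y x
  | ⟨t₁₂, t₂₁, h₁₂, h₂₁, h₁₂₁, h₂₁₂⟩ => ⟨t₂₁, t₁₂, h₂₁, h₁₂, h₂₁₂, h₁₂₁⟩

theorem OneConceptStep.symm {x y : TheoryObj} : OneConceptStep x y → OneConceptStep y x :=
  Or.symm

theorem DefEquiv.of_model_iff {L : FirstOrder.Language.{0,0}} {T T' : L.Theory}
    (h : ∀ (M : Type) [L.Structure M] [Nonempty M], M ⊨ T ↔ M ⊨ T') :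
    DefEquiv ⟨L, T⟩ ⟨L, T'⟩ :=
  ⟨.id L, .id L, fun _ => .of_model_imp fun M _ _ => (h M).2,
    fun _ => .of_model_imp fun M _ _ => (h M).1, Theory.models_iff_self T,
    Theory.models_iff_self T'⟩

theorem defEquiv_onTheory {L L' : FirstOrder.Language.{0,0}} (e : L ≃ᴸ L') (T : L.Theory) :
    DefEquiv ⟨L, T⟩ ⟨L', e.toLHom.onTheory T⟩ :=
  ⟨.ofLHom e.toLHom, .ofLHom e.invLHom, fun φ => (e.onTheory_models_onBoundedFormula_iff T φ).2,
    fun _ => e.models_invLHom_onBoundedFormula T,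
    fun φ => by simpa [Translation.ofLHom] using Theory.models_iff_self T φ,
    fun ψ => by simpa [Translation.ofLHom] using Theory.models_iff_self _ ψ⟩

theorem defEquiv_comapTheory_id {L : FirstOrder.Language.{0,0}} (T : L.Theory) :
    DefEquiv ⟨L, (LHom.id L).comapTheory T⟩ ⟨L, T⟩ :=
  DefEquiv.of_model_iff fun M _ _ => LHom.model_comapTheory_id_iff T M

theorem oneConcept_comapTheory_sumInl {L : FirstOrder.Language.{0,0}} (m : ℕ)
    (T : (L.sum (singleRelLang m)).Theory) :
    OneConcept ⟨L, LHom.sumInl.comapTheory T⟩ ⟨L.sum (singleRelLang m), T⟩ :=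
  ⟨m, rfl, fun φ => (LHom.sumInl.comapTheory_models_iff T φ).symm⟩

def equalityPart {L : FirstOrder.Language.{0,0}} (T : L.Theory) : Language.empty.Theory :=
  (LHom.ofIsEmpty Language.empty L).comapTheory T

theorem equalityPart_comapTheory {L L' : FirstOrder.Language.{0,0}} (F : L →ᴸ L')
    (T : L'.Theory) : equalityPart (F.comapTheory T) = equalityPart T := by
  rw [equalityPart, LHom.comapTheory_comapTheory, Subsingleton.elim (F.comp _)]
  rfl

theorem equalityPart_onTheory {L L' : FirstOrder.Language.{0,0}} (e : L ≃ᴸ L') (T : L.Theory) :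
    equalityPart (e.toLHom.onTheory T) = equalityPart T := by
  ext ψ
  change _ ⊨ᵇ _ ↔ _ ⊨ᵇ _
  rw [← e.onTheory_models_onBoundedFormula_iff, Subsingleton.elim (LHom.ofIsEmpty _ L')
    (e.toLHom.comp (LHom.ofIsEmpty _ L)), LHom.comp_onSentence]
  rfl

-- Adjoining the symbols one at a time makes each restriction step literally of the shape that
-- `OneConcept` requires (an equality of languages, not merely an isomorphism).
def langOfArities : List ℕ → FirstOrder.Language.{0,0}
  | [] => Language.empty
  | m :: l => (langOfArities l).sum (singleRelLang m)

instance langOfArities.isRelational : ∀ l, (langOfArities l).IsRelational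
  | [] => inferInstanceAs Language.empty.IsRelational
  | m :: l =>
    have := langOfArities.isRelational l
    have : (singleRelLang m).IsRelational := fun _ => inferInstanceAs (IsEmpty Empty)
    inferInstanceAs ((Language.sum _ _).IsRelational)

theorem mk_relations_langOfArities (l : List ℕ) (n : ℕ) :
    #((langOfArities l).Relations n) = l.count n := by
  induction l with
  | nil => exact mk_eq_zero Empty
  | cons m l ih =>
    change #(_ ⊕ _) = _
    rw [mk_sum, lift_id, lift_id, ih, List.count_cons]
    by_cases h : m = n
    · subst h; simp [singleRelLang]
    · simp [singleRelLang, h, Ne.symm h]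

theorem exists_count_eq_mk_relations (L : FirstOrder.Language.{0,0})
    [Finite (Σ n, L.Relations n)] : ∃ l : List ℕ, ∀ n, #(L.Relations n) = l.count n := by
  have := Fintype.ofFinite (Σ n, L.Relations n)
  classical
  refine ⟨((Finset.univ : Finset (Σ n, L.Relations n)).val.map Sigma.fst).toList, fun n => ?_⟩
  rw [← Multiset.coe_count, Multiset.coe_toList, Multiset.count_map, ← Finset.filter_val,
    Finset.card_val, ← Fintype.card_subtype, ← mk_fintype]
  exact mk_congr ((Equiv.sigmaSubtype n).symm.trans (Equiv.subtypeEquivRight fun _ => eq_comm))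

theorem exists_lEquiv_langOfArities (L : FirstOrder.Language.{0,0}) [L.IsRelational]
    [Finite (Σ n, L.Relations n)] : ∃ l, Nonempty (L ≃ᴸ langOfArities l) := by
  obtain ⟨l, hl⟩ := exists_count_eq_mk_relations L
  exact ⟨l, ⟨.ofSymbolEquivs (fun _ => Equiv.equivOfIsEmpty _ _) fun n =>
    Classical.choice (Cardinal.eq.1 ((hl n).trans (mk_relations_langOfArities l n).symm))⟩⟩

theorem reach_equalityPart_langOfArities (l : List ℕ) (T : (langOfArities l).Theory) :
    Reach DefEquiv OneConceptStep ⟨Language.empty, equalityPart T⟩ ⟨langOfArities l, T⟩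
      l.length := by
  induction l with
  | nil =>
    have hid : equalityPart T = (LHom.id _).comapTheory T :=
      congrArg (LHom.comapTheory · T) (Subsingleton.elim _ _)
    exact .estep (hid ▸ defEquiv_comapTheory_id T) (.refl _)
  | cons m l ih =>
    have := (ih (LHom.sumInl.comapTheory T)).trans
      (.sstep (.inl (oneConcept_comapTheory_sumInl m T)) (.refl _))
    rwa [equalityPart_comapTheory (LHom.sumInl : langOfArities l →ᴸ _) T] at this

theorem exists_reach_equalityPart {L : FirstOrder.Language.{0,0}} [L.IsRelational]
    [Finite (Σ n, L.Relations n)] (T : L.Theory) :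
    ∃ n, Reach DefEquiv OneConceptStep ⟨Language.empty, equalityPart T⟩ ⟨L, T⟩ n := by
  obtain ⟨l, ⟨e⟩⟩ := exists_lEquiv_langOfArities L
  have h := reach_equalityPart_langOfArities l (e.toLHom.onTheory T)
  rw [equalityPart_onTheory] at h
  exact ⟨_, h.trans (.estep (defEquiv_onTheory e T).symm (.refl _))⟩

section Spectrum

variable {L : FirstOrder.Language.{0,0}} {T : L.Theory} (M : Type) [Language.empty.Structure M]

theorem mem_equalityPart_iff (T : L.Theory) (ψ : Language.empty.Sentence) :
    ψ ∈ equalityPart T ↔ ∀ (N : T.ModelType.{0, 0, 0}) [Language.empty.Structure N], N ⊨ ψ :=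
  Theory.models_sentence_iff.trans <| forall_congr' fun N =>
    ⟨fun h _ => (LHom.realize_onSentence N _ ψ).1 h,
      fun h => let := Language.emptyStructure (M := N); (LHom.realize_onSentence N _ ψ).2 h⟩

theorem realize_of_model_equalityPart (hM : M ⊨ equalityPart T) {ψ : Language.empty.Sentence}
    (hψ : ∀ (N : T.ModelType.{0, 0, 0}) [Language.empty.Structure N], N ⊨ ψ) : M ⊨ ψ :=
  Theory.realize_sentence_of_mem _ ((mem_equalityPart_iff T ψ).2 hψ)

theorem exists_modelType_mk_eq_of_finite [Finite M] (hM : M ⊨ equalityPart T) :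
    ∃ N : T.ModelType.{0, 0, 0}, #N = #M := by
  obtain ⟨k, hk⟩ := Cardinal.lt_aleph0.1 (Cardinal.lt_aleph0_of_finite M)
  by_contra! hne
  have := realize_of_model_equalityPart M hM
    (ψ := (Sentence.cardGe _ k ⊓ (Sentence.cardGe _ (k + 1)).not).not) fun N _ => by
      rw [Sentence.realize_not, Sentence.realize_cardGe_inf_not_cardGe_succ, ← hk]
      exact hne N
  rw [Sentence.realize_not, Sentence.realize_cardGe_inf_not_cardGe_succ] at this
  exact this hk

theorem exists_modelType_mk_eq_of_infinite (hL : L.card ≤ ℵ₀) [Infinite M]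
    (hM : M ⊨ equalityPart T) : ∃ N : T.ModelType.{0, 0, 0}, #N = #M := by
  have hinf : ∃ N : T.ModelType.{0, 0, 0}, Infinite N := by
    refine Theory.exists_infinite_model_of_forall_le_card T fun n => ?_
    by_contra! hn
    have := realize_of_model_equalityPart M hM (ψ := (Sentence.cardGe _ n).not) fun N _ => by
      rw [Sentence.realize_not, Sentence.realize_cardGe, not_le]
      exact hn N
    rw [Sentence.realize_not, Sentence.realize_cardGe] at this
    exact this ((natCast_lt_aleph0 (n := n)).le.trans (aleph0_le_mk M))
  exact Theory.exists_model_card_eq hinf #M (aleph0_le_mk M)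
    (by simpa using hL.trans (aleph0_le_mk M))

theorem model_equalityPart_of_mk_eq (N : T.ModelType.{0, 0, 0}) (hN : #N = #M) :
    M ⊨ equalityPart T := by
  refine (Theory.model_iff _).2 fun ψ hψ => ?_
  obtain ⟨e⟩ := Cardinal.eq.1 hN
  let := Language.emptyStructure (M := N)
  exact (StrongHomClass.realize_sentence e ψ).1 ((mem_equalityPart_iff T ψ).1 hψ N)

theorem model_equalityPart_iff (hL : L.card ≤ ℵ₀) :
    M ⊨ equalityPart T ↔ ∃ N : T.ModelType.{0, 0, 0}, #N = #M := by
  refine ⟨fun hM => ?_, fun ⟨N, hN⟩ => model_equalityPart_of_mk_eq M N hN⟩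
  cases finite_or_infinite M
  · exact exists_modelType_mk_eq_of_finite M hM
  · exact exists_modelType_mk_eq_of_infinite M hL hM

end Spectrum

theorem exists_modelType_mk_eq_iff {L : FirstOrder.Language.{0,0}} (T : L.Theory) (κ : Cardinal) :
    (∃ N : T.ModelType.{0, 0, 0}, #N = κ) ↔
      ∃ (M : Type) (S : L.Structure M), Nonempty M ∧ @Theory.Model L M S T ∧ #M = κ :=
  ⟨fun ⟨N, hN⟩ => ⟨N, N.struc, N.nonempty', N.is_model, hN⟩,
    fun ⟨M, S, hne, hM, hκ⟩ => ⟨@Theory.ModelType.mk L T M S hM hne, hκ⟩⟩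

/-- If two theories over finite relational languages have models of exactly the same
cardinalities, then their conceptual distance is finite (they are connected in the
conceptual-distance cluster network). -/
theorem conceptualDist_finite_of_same_spectrum (x y : TheoryObj)
    (hxrel : ∀ n, IsEmpty (x.1.Functions n)) (hyrel : ∀ n, IsEmpty (y.1.Functions n))
    (hxfin : Finite (Σ n, x.1.Relations n)) (hyfin : Finite (Σ n, y.1.Relations n))
    (hspec : ∀ κ : Cardinal,
      (∃ (M : Type) (S : x.1.Structure M), Nonempty M ∧
        @FirstOrder.Language.Theory.Model x.1 M S x.2 ∧ #M = κ) ↔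
      (∃ (M : Type) (S : y.1.Structure M), Nonempty M ∧
        @FirstOrder.Language.Theory.Model y.1 M S y.2 ∧ #M = κ)) :
    ∃ n : ℕ, Reach DefEquiv OneConceptStep x y n := by
  obtain ⟨nx, hx⟩ := exists_reach_equalityPart x.2
  obtain ⟨ny, hy⟩ := exists_reach_equalityPart y.2
  have hxy : DefEquiv ⟨Language.empty, equalityPart x.2⟩ ⟨Language.empty, equalityPart y.2⟩ :=
    DefEquiv.of_model_iff fun M _ _ => by
      rw [model_equalityPart_iff M x.1.card_le_aleph0_of_finite,
        model_equalityPart_iff M y.1.card_le_aleph0_of_finite, exists_modelType_mk_eq_iff,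
        exists_modelType_mk_eq_iff]
      exact hspec #M
  exact ⟨_, (hx.symm DefEquiv.symm OneConceptStep.symm).trans (.estep hxy hy)⟩
end
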